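/- arXiv:1808.02291 — 9 statements merged into one kernel-verified Lean document; each statement's English description precedes it below -/
import Mathlib

section
/- Let Π be a temporal Datalog program consisting of forward-propagating rules, F a set of facts, and α a temporal fact with time argument τ that has a derivation δ from Π ∪ F. Let τ_min be the minimum time point occurring in F. Then every time point occurring in δ lies in the interval [τ_min, τ]. -/
/-- A fact is either rigid (no time argument) or temporal (with a natural-number time). -/
inductive TFact (A : Type) where
  | rigid (p : A)
  | temporal (p : A) (t : ℕ)

/-- The predicate of a fact. -/
def TFact.pred {A : Type} : TFact A → A
  | .rigid p => p
  | .temporal p _ => p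

/-- A forward-propagating rule with a rigid head: all body atoms are rigid. -/
structure RigidRule (A : Type) where
  head : A
  body : List A

/-- A forward-propagating rule with temporal head `headPred` at time `t`:
temporal body atoms are at times `t - k` for offsets `k`, rigid body atoms as given.
Rules mention no concrete time points: they are instantiated at every admissible `t`. -/
structure FPRule (A : Type) where
  headPred : A
  tempBody : List (A × ℕ)
  rigidBody : List A

/-- Entailment (existence of a hyper-resolution derivation) from a program of
forward-propagating rules `(Pr, Pt)` together with a set of facts `F`. -/
inductive Entails {A : Type} (Pr : Set (RigidRule A)) (Pt : Set (FPRule A))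
    (F : Set (TFact A)) : TFact A → Prop where
  | fact {α : TFact A} : α ∈ F → Entails Pr Pt F α
  | rigid {r : RigidRule A} : r ∈ Pr →
      (∀ b ∈ r.body, Entails Pr Pt F (.rigid b)) →
      Entails Pr Pt F (.rigid r.head)
  | temp {r : FPRule A} (t : ℕ) : r ∈ Pt →
      (∀ p ∈ r.tempBody, p.2 ≤ t) →
      (∀ p ∈ r.tempBody, Entails Pr Pt F (.temporal p.1 (t - p.2))) →
      (∀ b ∈ r.rigidBody, Entails Pr Pt F (.rigid b)) →
      Entails Pr Pt F (.temporal r.headPred t)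

/-- A derivation tree: a node labelled with a conclusion fact, with subderivations. -/
inductive Deriv (A : Type) where
  | node (concl : TFact A) (subs : List (Deriv A))

/-- The conclusion (root label head) of a derivation. -/
def Deriv.concl {A : Type} : Deriv A → TFact A
  | .node c _ => c

/-- Validity of a derivation from program `(Pr, Pt)` and facts `F`:
each node is labelled by a ground instance of a rule (or a fact, as a leaf),
and the body atoms are exactly the conclusions of the children. -/
inductive ValidDeriv {A : Type} (Pr : Set (RigidRule A)) (Pt : Set (FPRule A))
    (F : Set (TFact A)) : Deriv A → Prop where
  | fact {c : TFact A} : c ∈ F → ValidDeriv Pr Pt F (.node c [])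
  | rigid {r : RigidRule A} {subs : List (Deriv A)} : r ∈ Pr →
      subs.map Deriv.concl = r.body.map TFact.rigid →
      (∀ d ∈ subs, ValidDeriv Pr Pt F d) →
      ValidDeriv Pr Pt F (.node (.rigid r.head) subs)
  | temp {r : FPRule A} {subs : List (Deriv A)} (t : ℕ) : r ∈ Pt →
      (∀ p ∈ r.tempBody, p.2 ≤ t) →
      subs.map Deriv.concl =
        r.tempBody.map (fun p => TFact.temporal p.1 (t - p.2)) ++
          r.rigidBody.map TFact.rigid →
      (∀ d ∈ subs, ValidDeriv Pr Pt F d) →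
      ValidDeriv Pr Pt F (.node (.temporal r.headPred t) subs)

/-- A time point `t` occurs in a derivation. -/
inductive TimeIn {A : Type} : Deriv A → ℕ → Prop where
  | root (p : A) (t : ℕ) (subs : List (Deriv A)) :
      TimeIn (.node (.temporal p t) subs) t
  | sub {d : Deriv A} {t : ℕ} (c : TFact A) (subs : List (Deriv A)) :
      d ∈ subs → TimeIn d t → TimeIn (.node c subs) t

/-! Times only decrease from a node to its children, so every time in a derivation is bounded by
the root's. Conversely, because every temporal rule has a temporal body atom, each temporal node
has a temporal child at a time no larger than its own; following such children down ends at a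
fact of `F`, whose time is at least `τ_min`. -/

namespace ValidDeriv

variable {A : Type} {Pr : Set (RigidRule A)} {Pt : Set (FPRule A)} {F : Set (TFact A)}

lemma of_mem_subs {c : TFact A} {subs : List (Deriv A)} (h : ValidDeriv Pr Pt F (.node c subs))
    {d : Deriv A} (hd : d ∈ subs) : ValidDeriv Pr Pt F d := by
  cases h with
  | fact _ => simp at hd
  | rigid _ _ hsubs => exact hsubs d hd
  | temp _ _ _ _ hsubs => exact hsubs d hd

lemma exists_concl_temporal_ge {δ : Deriv A} (hδ : ValidDeriv Pr Pt F δ) {s : ℕ}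
    (hs : TimeIn δ s) : ∃ a τ, δ.concl = .temporal a τ ∧ s ≤ τ := by
  induction hδ with
  | fact _ =>
    cases hs with
    | root p _ _ => exact ⟨p, s, rfl, le_rfl⟩
    | sub _ _ hd _ => simp at hd
  | @rigid r subs _ hmap _ ih =>
    cases hs with
    | sub _ _ hd ht =>
      obtain ⟨b, τ, hcb, -⟩ := ih _ hd ht
      have hmem : Deriv.concl _ ∈ r.body.map TFact.rigid := hmap ▸ List.mem_map_of_mem hd
      simp [hcb] at hmem
  | @temp r subs t _ _ hmap _ ih =>
    refine ⟨r.headPred, t, rfl, ?_⟩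
    cases hs with
    | root => exact le_rfl
    | sub _ _ hd ht =>
      obtain ⟨b, τ, hcb, hle⟩ := ih _ hd ht
      have hmem : Deriv.concl _ ∈ _ := hmap ▸ List.mem_map_of_mem hd
      obtain ⟨k, -, hk⟩ : ∃ k, (b, k) ∈ r.tempBody ∧ t - k = τ := by
        simpa [hcb] using hmem
      omega

lemma le_of_concl_eq_temporal (hsafe : ∀ r ∈ Pt, r.tempBody ≠ [])
    {τmin : ℕ} (hlow : τmin ∈ lowerBounds {t : ℕ | ∃ p : A, TFact.temporal p t ∈ F})
    {δ : Deriv A} (hδ : ValidDeriv Pr Pt F δ) {a : A} {τ : ℕ}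
    (hc : δ.concl = .temporal a τ) : τmin ≤ τ := by
  induction hδ generalizing a τ with
  | fact hF =>
    cases hc
    exact hlow ⟨a, hF⟩
  | rigid => cases hc
  | @temp r subs t hr _ hmap _ ih =>
    cases hc
    obtain ⟨q, hq⟩ := List.exists_mem_of_ne_nil _ (hsafe r hr)
    have hmem : TFact.temporal q.1 (t - q.2) ∈ subs.map Deriv.concl :=
      hmap ▸ List.mem_append_left _ (List.mem_map_of_mem hq)
    obtain ⟨d, hd, hdc⟩ := List.mem_map.1 hmem
    exact (ih d hd hdc).trans (Nat.sub_le t q.2)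

lemma le_of_timeIn (hsafe : ∀ r ∈ Pt, r.tempBody ≠ [])
    {τmin : ℕ} (hlow : τmin ∈ lowerBounds {t : ℕ | ∃ p : A, TFact.temporal p t ∈ F})
    {δ : Deriv A} (hδ : ValidDeriv Pr Pt F δ) {s : ℕ} (hs : TimeIn δ s) : τmin ≤ s := by
  induction hs with
  | root => exact le_of_concl_eq_temporal hsafe hlow hδ rfl
  | sub _ _ hd _ ih => exact ih (hδ.of_mem_subs hd)

end ValidDeriv

/-- Every time point occurring in a derivation of a temporal fact with time `τ`
from a forward-propagating program and facts `F` lies in `[τ_min, τ]`,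
where `τ_min` is the minimum time point in `F`. -/
theorem times_in_derivation_bounded {A : Type}
    (Pr : Set (RigidRule A)) (Pt : Set (FPRule A)) (F : Set (TFact A))
    (hsafe : ∀ r ∈ Pt, r.tempBody ≠ [])
    (τmin : ℕ) (hmin : IsLeast {t : ℕ | ∃ p : A, TFact.temporal p t ∈ F} τmin)
    (a : A) (τ : ℕ) (δ : Deriv A)
    (hδ : ValidDeriv Pr Pt F δ) (hc : δ.concl = .temporal a τ) :
    ∀ t : ℕ, TimeIn δ t → τmin ≤ t ∧ t ≤ τ := by
  intro t ht
  obtain ⟨b, τ', hcb, hle⟩ := hδ.exists_concl_temporal_ge ht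
  obtain ⟨-, rfl⟩ := TFact.temporal.inj (hc.symm.trans hcb)
  exact ⟨ValidDeriv.le_of_timeIn hsafe hmin.2 hδ ht, hle⟩
end

section
/- Let Π be a program of forward-propagating rules, F a set of facts, α a temporal fact with time argument τ, and B the set of rigid facts in F. If Π ∪ F entails α, then Π ∪ B ∪ F|[0,τ] entails α, where F|[0,τ] denotes the temporal facts of F with time argument in [0, τ]. -/
/-- If `Π ∪ F` entails a temporal fact at time `τ`, then already
`Π ∪ B ∪ F|[0,τ]` entails it, where `B` is the set of rigid facts in `F` and
`F|[0,τ]` consists of the temporal facts of `F` with time argument at most `τ`. -/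
theorem entailment_from_past_restriction {A : Type}
    (Pr : Set (RigidRule A)) (Pt : Set (FPRule A)) (F : Set (TFact A))
    (a : A) (τ : ℕ)
    (h : Entails Pr Pt F (.temporal a τ)) :
    Entails Pr Pt
      ({f ∈ F | ∃ p : A, f = TFact.rigid p} ∪
       {f ∈ F | ∃ (p : A) (t : ℕ), f = TFact.temporal p t ∧ t ≤ τ})
      (.temporal a τ) := by
  suffices H : ∀ α, Entails Pr Pt F α → (∀ p t, α = TFact.temporal p t → t ≤ τ) →
      Entails Pr Pt
        ({f ∈ F | ∃ p : A, f = TFact.rigid p} ∪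
         {f ∈ F | ∃ (p : A) (t : ℕ), f = TFact.temporal p t ∧ t ≤ τ}) α by
    exact H _ h (by rintro p t h'; cases h'; rfl)
  intro α hα
  induction hα with
  | @fact β hβ =>
    intro hle
    apply Entails.fact
    cases β with
    | rigid p => exact Or.inl ⟨hβ, p, rfl⟩
    | temporal p t => exact Or.inr ⟨hβ, p, t, rfl, hle p t rfl⟩
  | rigid hr _ ih =>
    intro _
    exact Entails.rigid hr (fun b hb => ih b hb (by rintro p t h'; cases h'))
  | temp t hr hle _ _ ih1 ih2 =>
    intro hb
    have ht : t ≤ τ := hb _ t rfl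
    exact Entails.temp t hr hle
      (fun p hp => ih1 p hp (by rintro q s h'; cases h'; exact le_trans (Nat.sub_le _ _) ht))
      (fun b hbb => ih2 b hbb (by rintro p s h'; cases h'))
end

section
/- Let Π be a program of forward-propagating rules, F a set of facts, and α a rigid fact. If Π ∪ F entails α, then already Π' ∪ B entails α, where Π' is the subset of rules of Π all of whose atoms are rigid, and B is the set of rigid facts in F. In particular, every derivation of a rigid fact from Π ∪ F uses only rigid rules and rigid facts. -/
/-! Every rule with a temporal body atom has a temporal head, so no rigid fact is ever
derived through a temporal atom: by induction on derivations, the part of a derivation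
above a rigid node consists of rigid rules and rigid facts only. -/

namespace TFact

variable {A : Type}

def IsRigid (f : TFact A) : Prop := ∃ p : A, f = rigid p

@[simp]
theorem isRigid_rigid (p : A) : (rigid p).IsRigid := ⟨p, rfl⟩

@[simp]
theorem not_isRigid_temporal (p : A) (t : ℕ) : ¬(temporal p t).IsRigid := by
  rintro ⟨q, hq⟩
  cases hq

end TFact

open TFact

section

variable {A : Type} {Pr : Set (RigidRule A)} {Pt : Set (FPRule A)} {F : Set (TFact A)}

theorem Entails.of_isRigid {α : TFact A} (h : Entails Pr Pt F α) (hα : α.IsRigid) :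
    Entails Pr ∅ {f ∈ F | f.IsRigid} α := by
  induction h with
  | fact hF => exact .fact ⟨hF, hα⟩
  | rigid hr _ ih => exact .rigid hr fun b hb => ih b hb (isRigid_rigid b)
  | temp => exact absurd hα (not_isRigid_temporal _ _)

theorem Deriv.isRigid_concl_of_map_concl_eq {subs : List (Deriv A)} {body : List A}
    (hmap : subs.map Deriv.concl = body.map rigid) {d : Deriv A} (hd : d ∈ subs) :
    d.concl.IsRigid := by
  obtain ⟨b, -, hb⟩ := List.mem_map.1 (hmap ▸ List.mem_map_of_mem hd)
  exact ⟨b, hb.symm⟩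

theorem ValidDeriv.of_isRigid_concl {δ : Deriv A} (h : ValidDeriv Pr Pt F δ)
    (hδ : δ.concl.IsRigid) : ValidDeriv Pr ∅ {f ∈ F | f.IsRigid} δ := by
  induction h with
  | fact hF => exact .fact ⟨hF, hδ⟩
  | rigid hr hmap _ ih =>
    exact .rigid hr hmap fun d hd => ih d hd (Deriv.isRigid_concl_of_map_concl_eq hmap hd)
  | temp => exact absurd hδ (not_isRigid_temporal _ _)

end

/-- A rigid fact entailed by `Π ∪ F` is already entailed by the rigid (Datalog)
subprogram together with the rigid facts of `F`; moreover every derivation of a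
rigid fact only uses rigid rules and rigid facts. -/
theorem rigid_entailment_uses_rigid_part {A : Type}
    (Pr : Set (RigidRule A)) (Pt : Set (FPRule A)) (F : Set (TFact A)) (a : A) :
    (Entails Pr Pt F (.rigid a) →
      Entails Pr (∅ : Set (FPRule A)) {f ∈ F | ∃ p : A, f = TFact.rigid p} (.rigid a))
    ∧ (∀ δ : Deriv A, ValidDeriv Pr Pt F δ → (∃ p : A, δ.concl = TFact.rigid p) →
        ValidDeriv Pr (∅ : Set (FPRule A)) {f ∈ F | ∃ p : A, f = TFact.rigid p} δ) :=
  ⟨fun h => h.of_isRigid (isRigid_rigid a), fun _ h hδ => h.of_isRigid_concl hδ⟩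
end

section
/- Let Π be a program of forward-propagating rules whose rules have radius at most ρ, F a set of facts, and α a temporal fact with time argument τ. Let B be the rigid facts in F, let H be the set of temporal facts entailed by Π ∪ B ∪ F|[0,τ) with time argument in [τ−ρ, τ), and let U = F|τ (the temporal facts of F at time τ). Then Π ∪ F entails α if and only if Π ∪ B ∪ H ∪ U entails α. -/
/-! A derivation only looks backwards in time, and only `ρ` steps back across one rule
application. So a derivation of a fact before `τ` uses only the part of `F` before `τ`, and a
derivation at `τ` consists of rule applications at `τ` whose premises are facts of `F` at `τ`,
rigid facts, or temporal facts in the window `[τ - ρ, τ)`. -/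

def TFact.IsBefore {A : Type} (τ : ℕ) : TFact A → Prop
  | .rigid _ => True
  | .temporal _ t => t < τ

namespace Entails

variable {A : Type} {Pr : Set (RigidRule A)} {Pt : Set (FPRule A)}

theorem cut {F G : Set (TFact A)} (hG : ∀ γ ∈ G, Entails Pr Pt F γ) {β : TFact A}
    (h : Entails Pr Pt G β) : Entails Pr Pt F β := by
  induction h with
  | fact hm => exact hG _ hm
  | rigid hr _ ih => exact .rigid hr ih
  | temp t hr hle _ _ iht ihr => exact .temp t hr hle iht ihr

theorem mono {F G : Set (TFact A)} (hGF : G ⊆ F) {β : TFact A} (h : Entails Pr Pt G β) :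
    Entails Pr Pt F β :=
  h.cut fun _ hγ => .fact (hGF hγ)

theorem of_isBefore {τ : ℕ} {F G : Set (TFact A)} (hGF : ∀ γ ∈ G, γ.IsBefore τ → γ ∈ F)
    {β : TFact A} (h : Entails Pr Pt G β) (hβ : β.IsBefore τ) : Entails Pr Pt F β := by
  induction h with
  | fact hm => exact .fact (hGF _ hm hβ)
  | rigid hr _ ih => exact .rigid hr fun b hb => ih b hb trivial
  | temp t hr hle _ _ iht ihr =>
    refine .temp t hr hle (fun q hq => iht q hq ?_) (fun b hb => ihr b hb trivial)
    exact lt_of_le_of_lt (Nat.sub_le t q.2) hβ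

theorem temporal_of_window {ρ τ : ℕ} (hρ : ∀ r ∈ Pt, ∀ p ∈ r.tempBody, p.2 ≤ ρ)
    {F G : Set (TFact A)} (hnow : ∀ p, .temporal p τ ∈ F → .temporal p τ ∈ G)
    (hpast : ∀ p t, τ - ρ ≤ t → t < τ →
      Entails Pr Pt F (.temporal p t) → Entails Pr Pt G (.temporal p t))
    (hrigid : ∀ p, Entails Pr Pt F (.rigid p) → Entails Pr Pt G (.rigid p)) {a : A}
    (h : Entails Pr Pt F (.temporal a τ)) : Entails Pr Pt G (.temporal a τ) := by
  generalize hβ : TFact.temporal a τ = β at h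
  induction h generalizing a with
  | fact hm => subst hβ; exact .fact (hnow a hm)
  | rigid => cases hβ
  | @temp r t hr hle ht hrb iht _ =>
    cases hβ
    refine .temp τ hr hle (fun q hq => ?_) (fun b hb => hrigid b (hrb b hb))
    rcases Nat.eq_zero_or_pos q.2 with h0 | h0
    · exact iht q hq (by rw [h0, Nat.sub_zero])
    · exact hpast _ _ (Nat.sub_le_sub_left (hρ r hr q hq) τ)
        (Nat.sub_lt (h0.trans_le (hle q hq)) h0) (ht q hq)

end Entails

/-- Window characterisation of entailment: for a forward-propagating program of
radius at most `ρ`, entailment of a temporal fact at time `τ` from `Π ∪ F`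
coincides with entailment from `Π ∪ B ∪ H ∪ U`, where `B` are the rigid facts
of `F`, `H` the temporal facts entailed by `Π ∪ B ∪ F|[0,τ)` with time in
`[τ−ρ, τ)`, and `U = F|τ`. -/
theorem window_entailment_characterisation {A : Type}
    (Pr : Set (RigidRule A)) (Pt : Set (FPRule A)) (ρ : ℕ)
    (hρ : ∀ r ∈ Pt, ∀ p ∈ r.tempBody, p.2 ≤ ρ)
    (F : Set (TFact A)) (a : A) (τ : ℕ) :
    let B : Set (TFact A) := {f ∈ F | ∃ p : A, f = TFact.rigid p}
    let H : Set (TFact A) := {f : TFact A | ∃ (p : A) (t : ℕ),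
      f = TFact.temporal p t ∧ τ - ρ ≤ t ∧ t < τ ∧
      Entails Pr Pt (B ∪ {g ∈ F | ∃ (q : A) (s : ℕ), g = TFact.temporal q s ∧ s < τ}) f}
    let U : Set (TFact A) := {f ∈ F | ∃ p : A, f = TFact.temporal p τ}
    (Entails Pr Pt F (.temporal a τ) ↔ Entails Pr Pt (B ∪ H ∪ U) (.temporal a τ)) := by
  intro B H U
  have hpast : ∀ β : TFact A, β.IsBefore τ → Entails Pr Pt F β →
      Entails Pr Pt (B ∪ {g ∈ F | ∃ (q : A) (s : ℕ), g = TFact.temporal q s ∧ s < τ}) β := by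
    refine fun β hβ h => h.of_isBefore (fun γ hγ hγτ => ?_) hβ
    cases γ with
    | rigid q => exact .inl ⟨hγ, q, rfl⟩
    | temporal q s => exact .inr ⟨hγ, q, s, rfl, hγτ⟩
  constructor
  · refine Entails.temporal_of_window hρ (fun p hp => .inr ⟨hp, p, rfl⟩)
      (fun p t hρt htτ h => .fact (.inl (.inr ⟨p, t, rfl, hρt, htτ, hpast _ htτ h⟩)))
      (fun p h => h.of_isBefore (τ := 0) (fun γ hγ hγ0 => ?_) trivial)
    cases γ with
    | rigid q => exact .inl (.inl ⟨hγ, q, rfl⟩)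
    | temporal q s => exact absurd hγ0 (Nat.not_lt_zero s)
  · refine Entails.cut ?_
    rintro γ ((hγ | ⟨p, t, rfl, -, -, hγ⟩) | hγ)
    · exact .fact hγ.1
    · exact hγ.mono fun g hg => hg.elim (·.1) (·.1)
    · exact .fact hγ.1
end

section
/- Soundness of the regular-expression encoding: let R be a regular expression over alphabet Σ and Π_R the temporal Datalog program constructed inductively from R (base cases: R=∅ gives the empty program; R=σ gives F(t) ∧ A_σ(t) → G(t+1); R=ε gives F(t) → G(t); union, concatenation and plus are handled by renaming subprograms apart and adding linking rules as in the construction). If w = σ₁…σₙ ∈ L(R), τ is a time point, and D is a dataset containing F(τ) and A_{σᵢ}(τ+i−1) for each 1 ≤ i ≤ n, then Π_R ∪ D ⊨ G(τ+n). -/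
/-- Regular expressions over alphabet `σ`, with `plus` (one or more repetitions). -/
inductive RE (σ : Type) where
  | empty
  | eps
  | char (a : σ)
  | union (S T : RE σ)
  | concat (S T : RE σ)
  | plus (S : RE σ)

/-- The language of a regular expression. -/
inductive Lang {σ : Type} : RE σ → List σ → Prop where
  | eps : Lang .eps []
  | char (a : σ) : Lang (.char a) [a]
  | unionL {S T : RE σ} {w : List σ} : Lang S w → Lang (.union S T) w
  | unionR {S T : RE σ} {w : List σ} : Lang T w → Lang (.union S T) w
  | concat {S T : RE σ} {u v : List σ} :
      Lang S u → Lang T v → Lang (.concat S T) (u ++ v)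
  | plusOne {S : RE σ} {w : List σ} : Lang S w → Lang (.plus S) w
  | plusMore {S : RE σ} {u v : List σ} :
      Lang S u → Lang (.plus S) v → Lang (.plus S) (u ++ v)

/-- Predicates of the program `Π_R`: copies of `F` and `G` indexed by a path
(the path records the renaming-apart of subprograms), and the EDB predicates
`A_σ`, which are never renamed. -/
inductive RPred (σ : Type) where
  | F (path : List Bool)
  | G (path : List Bool)
  | A (a : σ)

/-- Renaming of predicates: every predicate other than the `A_σ` is renamed to
a fresh copy (tagged by `b`). -/
def ren {σ : Type} (b : Bool) : RPred σ → RPred σ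
  | .F p => .F (b :: p)
  | .G p => .G (b :: p)
  | .A a => .A a

/-- Apply a predicate renaming to a rule. -/
def mapRule {A B : Type} (f : A → B) (r : FPRule A) : FPRule B :=
  ⟨f r.headPred, r.tempBody.map (fun p => (f p.1, p.2)), r.rigidBody.map f⟩

/-- A linking rule `b(t) → h(t)`. -/
def link {σ : Type} (h b : RPred σ) : FPRule (RPred σ) := ⟨h, [(b, 0)], []⟩

/-- The inductive construction of the program `Π_R` from a regular expression:
`∅` gives the empty program; `σ` gives `F(t) ∧ A_σ(t) → G(t+1)`; `ε` gives
`F(t) → G(t)`; union, concatenation and plus rename the subprograms apart and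
add the linking rules. -/
def prog {σ : Type} : RE σ → Set (FPRule (RPred σ))
  | .empty => ∅
  | .char a => {⟨.G [], [(.F [], 1), (.A a, 1)], []⟩}
  | .eps => {link (.G []) (.F [])}
  | .union S T =>
      (mapRule (ren false) '' prog S) ∪ (mapRule (ren true) '' prog T) ∪
      {link (.F [false]) (.F []), link (.F [true]) (.F []),
       link (.G []) (.G [false]), link (.G []) (.G [true])}
  | .concat S T =>
      (mapRule (ren false) '' prog S) ∪ (mapRule (ren true) '' prog T) ∪
      {link (.F [false]) (.F []), link (.F [true]) (.G [false]),
       link (.G []) (.G [true])}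
  | .plus S =>
      (mapRule (ren false) '' prog S) ∪
      {link (.F [false]) (.F []), link (.F [false]) (.G [false]),
       link (.G []) (.G [false])}

/-! The program `Π_R` derives `G` from `F` along every word of `L(R)`. This is proved by induction
on `R` for every renamed copy of `Π_R` inside a larger program: the copy reached through the
path `L` computes with the predicates `F L` and `G L`, and the linking rules pass the current time
point from `F` to the copies of the subexpressions and back to `G`. For `S⁺` an inner induction on
the number of iterations runs through the loop `G'(t) → F'(t)`. -/

variable {σ : Type}

namespace RPred

/-- The renaming `ren b₁ ∘ ⋯ ∘ ren bₖ` for the path `L = [b₁, …, bₖ]`. -/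
def prependPath (L : List Bool) : RPred σ → RPred σ
  | .F p => .F (L ++ p)
  | .G p => .G (L ++ p)
  | .A a => .A a

@[simp]
lemma prependPath_F (L p : List Bool) : prependPath L (.F p : RPred σ) = .F (L ++ p) := rfl

@[simp]
lemma prependPath_G (L p : List Bool) : prependPath L (.G p : RPred σ) = .G (L ++ p) := rfl

@[simp]
lemma prependPath_A (L : List Bool) (a : σ) : prependPath L (.A a) = .A a := rfl

lemma prependPath_nil : (prependPath [] : RPred σ → RPred σ) = id := by
  funext p; cases p <;> rfl

lemma prependPath_ren (L : List Bool) (b : Bool) (p : RPred σ) :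
    prependPath L (ren b p) = prependPath (L ++ [b]) p := by
  cases p <;> simp [ren]

end RPred

open RPred

lemma mapRule_id {A : Type} (r : FPRule A) : mapRule id r = r := by
  simp [mapRule]

lemma mapRule_mapRule {A B C : Type} (f : B → C) (g : A → B) (r : FPRule A) :
    mapRule f (mapRule g r) = mapRule (f ∘ g) r := by
  simp [mapRule, Function.comp_def]

lemma Entails.of_link {P : Set (FPRule (RPred σ))} {D : Set (TFact (RPred σ))}
    {h b : RPred σ} {t : ℕ} (hr : link h b ∈ P) (hb : Entails ∅ P D (.temporal b t)) :
    Entails ∅ P D (.temporal h t) :=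
  .temp t hr (by simp [link]) (by simpa [link] using hb) (by simp [link])

def OccursAt (D : Set (TFact (RPred σ))) (w : List σ) (τ : ℕ) : Prop :=
  ∀ i : Fin w.length, TFact.temporal (RPred.A (w.get i)) (τ + i) ∈ D

lemma OccursAt.of_append {D : Set (TFact (RPred σ))} {u v : List σ} {τ : ℕ}
    (h : OccursAt D (u ++ v) τ) : OccursAt D u τ ∧ OccursAt D v (τ + u.length) := by
  constructor
  · intro i
    simpa [List.getElem_append_left i.isLt] using h ⟨i, by simp; omega⟩
  · intro i
    simpa [Nat.add_assoc] using h ⟨u.length + i, by simp⟩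

def ContainsCopy (P : Set (FPRule (RPred σ))) (L : List Bool) (R : RE σ) : Prop :=
  mapRule (prependPath L) '' prog R ⊆ P

lemma containsCopy_prog (R : RE σ) : ContainsCopy (prog R) [] R := by
  simp [ContainsCopy, prependPath_nil, mapRule_id]

namespace ContainsCopy

variable {P : Set (FPRule (RPred σ))} {D : Set (TFact (RPred σ))} {L : List Bool}
  {R S : RE σ} {t : ℕ}

lemma child {b : Bool} (hP : ContainsCopy P L R) (hS : mapRule (ren b) '' prog S ⊆ prog R) :
    ContainsCopy P (L ++ [b]) S := by
  intro r ⟨r₀, hr₀, hr⟩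
  refine hP ⟨mapRule (ren b) r₀, hS ⟨r₀, hr₀, rfl⟩, ?_⟩
  rw [← hr, mapRule_mapRule]
  congr 1
  funext p
  exact prependPath_ren L b p

lemma entails_link {h b : RPred σ} (hP : ContainsCopy P L R) (hl : link h b ∈ prog R)
    (hb : Entails ∅ P D (.temporal (prependPath L b) t)) :
    Entails ∅ P D (.temporal (prependPath L h) t) :=
  .of_link (hP ⟨link h b, hl, rfl⟩) hb

lemma enter {b : Bool} (hP : ContainsCopy P L R) (hl : link (.F [b]) (.F []) ∈ prog R)
    (hF : Entails ∅ P D (.temporal (.F L) t)) :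
    Entails ∅ P D (.temporal (.F (L ++ [b])) t) :=
  hP.entails_link hl (by simpa using hF)

lemma exit {b : Bool} (hP : ContainsCopy P L R) (hl : link (.G []) (.G [b]) ∈ prog R)
    (hG : Entails ∅ P D (.temporal (.G (L ++ [b])) t)) :
    Entails ∅ P D (.temporal (.G L) t) := by
  simpa using hP.entails_link hl hG

lemma relink {b b' : Bool} (hP : ContainsCopy P L R) (hl : link (.F [b']) (.G [b]) ∈ prog R)
    (hG : Entails ∅ P D (.temporal (.G (L ++ [b])) t)) :
    Entails ∅ P D (.temporal (.F (L ++ [b'])) t) :=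
  hP.entails_link hl hG

end ContainsCopy

@[elab_as_elim]
lemma Lang.plus_induction {S : RE σ} {motive : List σ → Prop} {w : List σ}
    (hw : Lang (.plus S) w) (one : ∀ w, Lang S w → motive w)
    (more : ∀ u v, Lang S u → motive v → motive (u ++ v)) : motive w := by
  generalize hR : RE.plus S = R at hw
  induction hw with
  | plusOne h => cases hR; exact one _ h
  | plusMore h _ _ ih => cases hR; exact more _ _ h (ih rfl)
  | _ => cases hR

theorem entails_G_of_lang {P : Set (FPRule (RPred σ))} {D : Set (TFact (RPred σ))} (R : RE σ)
    {w : List σ} (hw : Lang R w) {L : List Bool} {τ : ℕ} (hP : ContainsCopy P L R)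
    (hF : Entails ∅ P D (.temporal (.F L) τ)) (hA : OccursAt D w τ) :
    Entails ∅ P D (.temporal (.G L) (τ + w.length)) := by
  induction R generalizing w L τ with
  | empty => cases hw
  | eps =>
    cases hw
    simpa using hP.entails_link (h := .G []) (b := .F []) rfl (by simpa using hF)
  | char a =>
    cases hw
    have hr : (⟨.G L, [(.F L, 1), (.A a, 1)], []⟩ : FPRule (RPred σ)) ∈ P :=
      hP ⟨_, rfl, by simp [mapRule]⟩
    have hAa : Entails ∅ P D (.temporal (.A a) τ) := .fact (by simpa using hA ⟨0, by simp⟩)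
    exact .temp (τ + 1) hr (by simp) (by simp [hF, hAa]) (by simp)
  | union S T ihS ihT =>
    cases hw with
    | unionL hS =>
      have hSP : ContainsCopy P (L ++ [false]) S := hP.child fun _ h => by simp [prog, h]
      exact hP.exit (by simp [prog]) (ihS hS hSP (hP.enter (by simp [prog]) hF) hA)
    | unionR hT =>
      have hTP : ContainsCopy P (L ++ [true]) T := hP.child fun _ h => by simp [prog, h]
      exact hP.exit (by simp [prog]) (ihT hT hTP (hP.enter (by simp [prog]) hF) hA)
  | concat S T ihS ihT =>
    cases hw with
    | concat hu hv =>
      have hSP : ContainsCopy P (L ++ [false]) S := hP.child fun _ h => by simp [prog, h]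
      have hTP : ContainsCopy P (L ++ [true]) T := hP.child fun _ h => by simp [prog, h]
      obtain ⟨hAu, hAv⟩ := hA.of_append
      have hGu := ihS hu hSP (hP.enter (by simp [prog]) hF) hAu
      have hGv := ihT hv hTP (hP.relink (by simp [prog]) hGu) hAv
      rw [List.length_append, ← Nat.add_assoc]
      exact hP.exit (by simp [prog]) hGv
  | plus S ihS =>
    have hSP : ContainsCopy P (L ++ [false]) S := hP.child fun _ h => by simp [prog, h]
    suffices loop : ∀ τ, Entails ∅ P D (.temporal (.F (L ++ [false])) τ) →
        OccursAt D w τ → Entails ∅ P D (.temporal (.G (L ++ [false])) (τ + w.length)) from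
      hP.exit (by simp [prog]) (loop τ (hP.enter (by simp [prog]) hF) hA)
    refine Lang.plus_induction hw (fun w hw τ hF hA => ihS hw hSP hF hA) ?_
    intro u v hu ih τ hF hA
    obtain ⟨hAu, hAv⟩ := hA.of_append
    rw [List.length_append, ← Nat.add_assoc]
    exact ih _ (hP.relink (by simp [prog]) (ihS hu hSP hF hAu)) hAv

/-- Soundness of the regular-expression encoding: if `w = σ₁…σₙ ∈ L(R)` and the
dataset `D` contains `F(τ)` and `A_{σᵢ}(τ+i−1)` for `1 ≤ i ≤ n`, then
`Π_R ∪ D ⊨ G(τ+n)`. -/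
theorem regex_encoding_sound {σ : Type} (R : RE σ) (w : List σ) (hw : Lang R w)
    (τ : ℕ) (D : Set (TFact (RPred σ)))
    (hF : TFact.temporal (RPred.F []) τ ∈ D)
    (hA : ∀ i : Fin w.length, TFact.temporal (RPred.A (w.get i)) (τ + i) ∈ D) :
    Entails (∅ : Set (RigidRule (RPred σ))) (prog R) D
      (.temporal (RPred.G []) (τ + w.length)) :=
  entails_G_of_lang R hw (containsCopy_prog R) (.fact hF) hA
end

section
/- Completeness of the regular-expression encoding: with Π_R as constructed from regular expression R, if Π_R ∪ D ⊨ G(τ) for some dataset D over the EDB predicates F and A_σ (σ ∈ Σ), then there exists a word σ₁…σₙ ∈ L(R) such that F(τ−n) ∈ D and A_{σᵢ}(τ−n+i−1) ∈ D for each 1 ≤ i ≤ n. -/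
/-!
A derivation from a dataset stays inside every interpretation that contains the dataset and
satisfies all rules, so it suffices to exhibit one such interpretation in which `G(τ)` means the
conclusion. It is built by recursion on `R` relative to a set `In` of admissible start times:
`F(t)` holds iff `t ∈ In`, `G(t)` iff the `A`-facts of the dataset spell a word of `L(R)` from a
start time in `In` up to `t`, and the renamed copies belonging to a subexpression are interpreted
in the same way for that subexpression, with start times `In` (union, left factor), the
acceptance times of the left factor (right factor), or `In` together with the acceptance times
of `S⁺` itself (body of `S⁺`).
-/

section LeastModel

variable {A B : Type}

def TFact.map (g : A → B) : TFact A → TFact B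
  | .rigid p => .rigid (g p)
  | .temporal p t => .temporal (g p) t

def RigidRule.HoldsIn (M : Set (TFact A)) (r : RigidRule A) : Prop :=
  (∀ b ∈ r.body, .rigid b ∈ M) → .rigid r.head ∈ M

def FPRule.HoldsIn (M : Set (TFact A)) (r : FPRule A) : Prop :=
  ∀ t, (∀ p ∈ r.tempBody, p.2 ≤ t) →
    (∀ p ∈ r.tempBody, .temporal p.1 (t - p.2) ∈ M) →
    (∀ b ∈ r.rigidBody, .rigid b ∈ M) → .temporal r.headPred t ∈ M

theorem Entails.mem_of_holdsIn {Pr : Set (RigidRule A)} {Pt : Set (FPRule A)}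
    {D M : Set (TFact A)} (hDM : D ⊆ M) (hPr : ∀ r ∈ Pr, r.HoldsIn M)
    (hPt : ∀ r ∈ Pt, r.HoldsIn M) {α : TFact A} (h : Entails Pr Pt D α) : α ∈ M := by
  induction h with
  | fact hα => exact hDM hα
  | rigid hr _ ih => exact hPr _ hr ih
  | temp t hr hle _ _ ihT ihR => exact hPt _ hr t hle ihT ihR

theorem FPRule.HoldsIn.mapRule {g : A → B} {M : Set (TFact A)} {M' : Set (TFact B)}
    (hg : ∀ f, f.map g ∈ M' ↔ f ∈ M) {r : FPRule A} (hr : r.HoldsIn M) :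
    (mapRule g r).HoldsIn M' := by
  intro t hle hT hR
  exact (hg (.temporal r.headPred t)).2 (hr t (fun p hp => hle _ (List.mem_map_of_mem hp))
    (fun p hp => (hg (.temporal p.1 (t - p.2))).1 (hT _ (List.mem_map_of_mem hp)))
    (fun b hb => (hg (.rigid b)).1 (hR _ (List.mem_map_of_mem hb))))

end LeastModel

section RegexModel

variable {σ : Type}

theorem FPRule.HoldsIn.link {M : Set (TFact (RPred σ))} {h b : RPred σ}
    (hM : ∀ t, .temporal b t ∈ M → .temporal h t ∈ M) : (link h b).HoldsIn M := by
  intro t _ hT _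
  exact hM t (hT (b, 0) (List.mem_singleton_self _))

theorem Lang.plus_append {S : RE σ} {v w : List σ} (hv : Lang (.plus S) v)
    (hw : Lang S w) : Lang (.plus S) (v ++ w) := by
  generalize hT : RE.plus S = T at hv
  induction hv with
  | plusOne hu => cases hT; exact .plusMore hu (.plusOne hw)
  | plusMore hu _ _ ih => cases hT; rw [List.append_assoc]; exact .plusMore hu (ih rfl)
  | eps | char | unionL | unionR | concat => cases hT

variable (D : Set (TFact (RPred σ)))

def Spells (w : List σ) (s : ℕ) : Prop :=
  ∀ i : Fin w.length, .temporal (.A (w.get i)) (s + i) ∈ D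

def Accepts (R : RE σ) (In : ℕ → Prop) (t : ℕ) : Prop :=
  ∃ s w, In s ∧ Lang R w ∧ Spells D w s ∧ s + w.length = t

def Holds : RE σ → (ℕ → Prop) → RPred σ → ℕ → Prop
  | _, _, .A a, t => .temporal (.A a) t ∈ D
  | _, In, .F [], t => In t
  | R, In, .G [], t => Accepts D R In t
  | .union S _, In, .F (false :: p), t => Holds S In (.F p) t
  | .union S _, In, .G (false :: p), t => Holds S In (.G p) t
  | .union _ T, In, .F (true :: p), t => Holds T In (.F p) t
  | .union _ T, In, .G (true :: p), t => Holds T In (.G p) t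
  | .concat S _, In, .F (false :: p), t => Holds S In (.F p) t
  | .concat S _, In, .G (false :: p), t => Holds S In (.G p) t
  | .concat S T, In, .F (true :: p), t => Holds T (Accepts D S In) (.F p) t
  | .concat S T, In, .G (true :: p), t => Holds T (Accepts D S In) (.G p) t
  | .plus S, In, .F (false :: p), t =>
      Holds S (fun s => In s ∨ Accepts D (.plus S) In s) (.F p) t
  | .plus S, In, .G (false :: p), t =>
      Holds S (fun s => In s ∨ Accepts D (.plus S) In s) (.G p) t
  | _, _, _, _ => False

def Model (R : RE σ) (In : ℕ → Prop) : Set (TFact (RPred σ)) := fun f =>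
  match f with
  | .rigid _ => False
  | .temporal p t => Holds D R In p t

variable {D}

@[simp] theorem holds_A (R : RE σ) (In : ℕ → Prop) (a : σ) (t : ℕ) :
    Holds D R In (.A a) t ↔ .temporal (.A a) t ∈ D := by
  cases R <;> rfl

@[simp] theorem holds_F_nil (R : RE σ) (In : ℕ → Prop) (t : ℕ) :
    Holds D R In (.F []) t ↔ In t := by
  cases R <;> rfl

@[simp] theorem holds_G_nil (R : RE σ) (In : ℕ → Prop) (t : ℕ) :
    Holds D R In (.G []) t ↔ Accepts D R In t := by
  cases R <;> rfl

@[simp] theorem mem_model_temporal (R : RE σ) (In : ℕ → Prop) (p : RPred σ) (t : ℕ) :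
    .temporal p t ∈ Model D R In ↔ Holds D R In p t :=
  Iff.rfl

theorem map_ren_mem_model_iff {R C : RE σ} {In In' : ℕ → Prop} {b : Bool}
    (h : ∀ path t, (Holds D R In (.F (b :: path)) t ↔ Holds D C In' (.F path) t) ∧
      (Holds D R In (.G (b :: path)) t ↔ Holds D C In' (.G path) t))
    (f : TFact (RPred σ)) : f.map (ren b) ∈ Model D R In ↔ f ∈ Model D C In' := by
  rcases f with _ | ⟨_ | _ | a, t⟩
  · exact Iff.rfl
  · exact (h _ t).1
  · exact (h _ t).2
  · exact (holds_A R In a t).trans (holds_A C In' a t).symm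

theorem Accepts.of_lang {R R' : RE σ} {In : ℕ → Prop} {t : ℕ}
    (hR : ∀ w, Lang R w → Lang R' w) (h : Accepts D R In t) : Accepts D R' In t :=
  let ⟨s, w, hs, hw, hsp, hst⟩ := h
  ⟨s, w, hs, hR w hw, hsp, hst⟩

theorem Spells.append {u v : List σ} {s : ℕ} (hu : Spells D u s)
    (hv : Spells D v (s + u.length)) : Spells D (u ++ v) s := by
  rintro ⟨i, hi⟩
  simp only [List.get_eq_getElem, List.getElem_append]
  split_ifs with h
  · exact hu ⟨i, h⟩
  · have := hv ⟨i - u.length, by simp at hi; omega⟩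
    simpa [show s + u.length + (i - u.length) = s + i by omega] using this

theorem Accepts.append {R S U : RE σ} {In : ℕ → Prop} {t : ℕ}
    (hL : ∀ u v, Lang R u → Lang S v → Lang U (u ++ v))
    (h : Accepts D S (Accepts D R In) t) : Accepts D U In t := by
  obtain ⟨s, v, ⟨r, u, hr, hu, hsu, rfl⟩, hv, hsv, rfl⟩ := h
  exact ⟨r, u ++ v, hr, hL u v hu hv, hsu.append hsv, by simp [Nat.add_assoc]⟩

theorem Accepts.plus {S : RE σ} {In : ℕ → Prop} {t : ℕ}
    (h : Accepts D S (fun s => In s ∨ Accepts D (.plus S) In s) t) :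
    Accepts D (.plus S) In t := by
  obtain ⟨s, w, hs | hs, hw, hsw, hst⟩ := h
  · exact ⟨s, w, hs, .plusOne hw, hsw, hst⟩
  · exact Accepts.append (fun _ _ => Lang.plus_append) ⟨s, w, hs, hw, hsw, hst⟩

theorem prog_holdsIn_model (R : RE σ) (In : ℕ → Prop) :
    ∀ r ∈ prog R, r.HoldsIn (Model D R In) := by
  induction R generalizing In with
  | empty => simp [prog]
  | eps =>
    rintro _ rfl
    exact .link fun t (ht : In t) =>
      show Accepts D .eps In t from ⟨t, [], ht, .eps, nofun, rfl⟩
  | char a =>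
    rintro _ rfl t hle hT _
    have h1 : 1 ≤ t := hle (.F [], 1) (by simp)
    have hF : In (t - 1) := hT (.F [], 1) (by simp)
    have hA : TFact.temporal (.A a) (t - 1) ∈ D :=
      (holds_A _ _ _ _).1 (hT (.A a, 1) (by simp))
    show Accepts D (.char a) In t
    exact ⟨t - 1, [a], hF, .char a, fun i => by simpa [Fin.fin_one_eq_zero i] using hA,
      by simp; omega⟩
  | union S T ihS ihT =>
    rintro _ ((⟨r, hr, rfl⟩ | ⟨r, hr, rfl⟩) | rfl | rfl | rfl | rfl)
    · exact (ihS In r hr).mapRule (map_ren_mem_model_iff fun _ _ => ⟨Iff.rfl, Iff.rfl⟩)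
    · exact (ihT In r hr).mapRule (map_ren_mem_model_iff fun _ _ => ⟨Iff.rfl, Iff.rfl⟩)
    all_goals
      refine .link fun _ h => ?_
      simp only [mem_model_temporal, Holds, holds_F_nil, holds_G_nil] at h ⊢
    · exact h
    · exact h
    · exact h.of_lang fun _ => .unionL
    · exact h.of_lang fun _ => .unionR
  | concat S T ihS ihT =>
    rintro _ ((⟨r, hr, rfl⟩ | ⟨r, hr, rfl⟩) | rfl | rfl | rfl)
    · exact (ihS In r hr).mapRule (map_ren_mem_model_iff fun _ _ => ⟨Iff.rfl, Iff.rfl⟩)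
    · exact (ihT _ r hr).mapRule (map_ren_mem_model_iff fun _ _ => ⟨Iff.rfl, Iff.rfl⟩)
    all_goals
      refine .link fun _ h => ?_
      simp only [mem_model_temporal, Holds, holds_F_nil, holds_G_nil] at h ⊢
    · exact h
    · exact h
    · exact h.append fun _ _ => .concat
  | plus S ihS =>
    rintro _ (⟨r, hr, rfl⟩ | rfl | rfl | rfl)
    · exact (ihS _ r hr).mapRule (map_ren_mem_model_iff fun _ _ => ⟨Iff.rfl, Iff.rfl⟩)
    all_goals
      refine .link fun _ h => ?_
      simp only [mem_model_temporal, Holds, holds_F_nil, holds_G_nil] at h ⊢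
    · exact Or.inl h
    · exact Or.inr h.plus
    · exact h.plus

end RegexModel

/-- Completeness of the regular-expression encoding: if `Π_R ∪ D ⊨ G(τ)` for a
dataset `D` over the EDB predicates `F` and `A_σ`, then there is a word
`σ₁…σₙ ∈ L(R)` with `F(τ−n) ∈ D` and `A_{σᵢ}(τ−n+i−1) ∈ D` for `1 ≤ i ≤ n`. -/
theorem regex_encoding_complete {σ : Type} (R : RE σ) (τ : ℕ)
    (D : Set (TFact (RPred σ)))
    (hD : ∀ f ∈ D, ∃ t : ℕ,
      f = TFact.temporal (RPred.F []) t ∨ ∃ a : σ, f = TFact.temporal (RPred.A a) t)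
    (h : Entails (∅ : Set (RigidRule (RPred σ))) (prog R) D
      (.temporal (RPred.G []) τ)) :
    ∃ w : List σ, Lang R w ∧ w.length ≤ τ ∧
      TFact.temporal (RPred.F []) (τ - w.length) ∈ D ∧
      ∀ i : Fin w.length,
        TFact.temporal (RPred.A (w.get i)) (τ - w.length + i) ∈ D := by
  let In : ℕ → Prop := fun t => .temporal (.F []) t ∈ D
  have hDM : D ⊆ Model D R In := by
    intro f hf
    obtain ⟨t, rfl | ⟨a, rfl⟩⟩ := hD f hf <;> simpa [In] using hf
  have hG := h.mem_of_holdsIn hDM (by simp) (prog_holdsIn_model R In)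
  obtain ⟨s, w, hs, hw, hsw, rfl⟩ := (holds_G_nil R In τ).1 hG
  exact ⟨w, hw, by omega, by simpa using hs, by simpa [Spells] using hsw⟩
end

section
/- Correctness of the regular-expression reduction for containment: for regular expressions R₁, R₂ over alphabet Σ with associated queries Q_{R₁} = ⟨G, Π_{R₁}⟩ and Q_{R₂} = ⟨G, Π_{R₂}⟩ satisfying the characterization (★) — G(τ) ∈ Q_{Rᵢ}(D) iff there is a word σ₁…σₙ ∈ L(Rᵢ) with F(τ−n), A_{σ₁}(τ−n), …, A_{σₙ}(τ−1) all in D — it holds that L(R₁) ⊆ L(R₂) if and only if Q_{R₁} is contained in Q_{R₂} (i.e., Q_{R₁}(D) ⊆ Q_{R₂}(D) for every dataset D). -/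
/-- Facts of the word-encoding datasets: `F(t)` marks a starting position and
`A_σ(t)` marks an occurrence of the symbol `σ` at time `t`. -/
inductive EFact (σ : Type) where
  | F (t : ℕ)
  | A (a : σ) (t : ℕ)

/-- Correctness of the regular-expression reduction for containment: given the
characterisation (★) of the queries `Q_{R₁}`, `Q_{R₂}` in terms of the
languages `L(R₁)`, `L(R₂)`, we have `L(R₁) ⊆ L(R₂)` iff `Q_{R₁} ⊑ Q_{R₂}`.
Here `τ ∈ Qᵢ D` stands for `G(τ) ∈ Q_{Rᵢ}(D)`. -/
theorem regex_reduction_correct {σ : Type} (L1 L2 : Set (List σ))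
    (Q1 Q2 : Set (EFact σ) → Set ℕ)
    (star1 : ∀ (D : Set (EFact σ)) (τ : ℕ), τ ∈ Q1 D ↔
      ∃ w ∈ L1, w.length ≤ τ ∧ EFact.F (τ - w.length) ∈ D ∧
        ∀ i : Fin w.length, EFact.A (w.get i) (τ - w.length + i) ∈ D)
    (star2 : ∀ (D : Set (EFact σ)) (τ : ℕ), τ ∈ Q2 D ↔
      ∃ w ∈ L2, w.length ≤ τ ∧ EFact.F (τ - w.length) ∈ D ∧
        ∀ i : Fin w.length, EFact.A (w.get i) (τ - w.length + i) ∈ D) :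
    L1 ⊆ L2 ↔ ∀ D : Set (EFact σ), Q1 D ⊆ Q2 D := by
  constructor
  · intro hL D τ hτ
    rw [star2]
    obtain ⟨w, hw, h⟩ := (star1 D τ).1 hτ
    exact ⟨w, hL hw, h⟩
  · intro hQ w hw
    set D : Set (EFact σ) := {f | f = EFact.F 0 ∨
      ∃ i : Fin w.length, f = EFact.A (w.get i) i} with hD
    have h1 : w.length ∈ Q1 D := by
      rw [star1]
      refine ⟨w, hw, le_refl _, ?_, ?_⟩
      · left; simp
      · intro i; right; exact ⟨i, by simp⟩
    have h2 := hQ D h1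
    rw [star2] at h2
    obtain ⟨w', hw', hlen, hF, hA⟩ := h2
    have hlen' : w'.length = w.length := by
      rcases hF with h | ⟨i, h⟩
      · have := EFact.F.inj h
        omega
      · exact absurd h (by simp)
    have : w' = w := by
      apply List.ext_get hlen'
      intro n h1' h2'
      have := hA ⟨n, h1'⟩
      rcases this with h | ⟨i, h⟩
      · exact absurd h (by simp)
      · obtain ⟨ha, ht⟩ := EFact.A.inj h
        simp only [Fin.val_mk] at ht
        have hi : (i : ℕ) = n := by omega
        simp only [List.get_eq_getElem, Fin.val_mk] at ha ⊢
        rw [ha]; congr 1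
    rwa [this] at hw'
end

section
/- Soundness of the 3-SAT reduction: given a satisfiable 3-CNF formula α with clauses c₁,…,cₙ and literal predicates l_{i,j} (1 ≤ i ≤ n, 1 ≤ j ≤ 3), let Q₁ = ⟨g, Π₁⟩ where Π₁ contains the rule c₁ ∧ … ∧ cₙ → g and all rules l_{i,j} → cᵢ, and let Q₂ = ⟨g, Π₂⟩ where Π₂ contains the rule l_{i,j} ∧ l_{p,q} → g for every pair of complementary literals over the same propositional variable. Then α is satisfiable if and only if Q₁ is not contained in Q₂ (i.e., there is a dataset D of EDB facts over the l_{i,j} with g ∈ Q₁(D) and g ∉ Q₂(D)). -/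
/-- Propositional atoms of the 3-SAT reduction: the goal `g`, a proposition
`cᵢ` for each clause, and a proposition `l_{i,j}` for each literal occurrence. -/
inductive PAtom (n : ℕ) where
  | g
  | c (i : Fin n)
  | l (i : Fin n) (j : Fin 3)

/-- Entailment for `Π₁`, consisting of the rule `c₁ ∧ … ∧ cₙ → g` and all rules
`l_{i,j} → cᵢ`, from a dataset `D` of EDB facts over the `l_{i,j}`. -/
inductive Ent1 {n : ℕ} (D : Set (Fin n × Fin 3)) : PAtom n → Prop where
  | edb {i : Fin n} {j : Fin 3} : (i, j) ∈ D → Ent1 D (.l i j)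
  | clause {i : Fin n} {j : Fin 3} : Ent1 D (.l i j) → Ent1 D (.c i)
  | goal : (∀ i : Fin n, Ent1 D (.c i)) → Ent1 D .g

/-- Entailment for `Π₂`, consisting of the rule `l_{i,j} ∧ l_{p,q} → g` for each
pair of complementary literals over the same propositional variable
(`lit i j` gives the variable and polarity of the `j`-th literal of clause `i`). -/
inductive Ent2 {n : ℕ} {V : Type} (lit : Fin n → Fin 3 → V × Bool)
    (D : Set (Fin n × Fin 3)) : PAtom n → Prop where
  | edb {i : Fin n} {j : Fin 3} : (i, j) ∈ D → Ent2 lit D (.l i j)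
  | goal {i p : Fin n} {j q : Fin 3} :
      (lit i j).1 = (lit p q).1 → (lit i j).2 = !(lit p q).2 →
      Ent2 lit D (.l i j) → Ent2 lit D (.l p q) → Ent2 lit D .g

/-- Soundness of the 3-SAT reduction: the 3-CNF formula given by `lit` is
satisfiable iff `Q₁ = ⟨g, Π₁⟩` is not contained in `Q₂ = ⟨g, Π₂⟩`, i.e. there
is a dataset `D` over the `l_{i,j}` with `g ∈ Q₁(D)` and `g ∉ Q₂(D)`. -/
theorem threesat_reduction_correct {n : ℕ} {V : Type}
    (lit : Fin n → Fin 3 → V × Bool) :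
    (∃ f : V → Bool, ∀ i : Fin n, ∃ j : Fin 3, f (lit i j).1 = (lit i j).2) ↔
    ∃ D : Set (Fin n × Fin 3), Ent1 D .g ∧ ¬ Ent2 lit D .g := by
  constructor
  · rintro ⟨f, hf⟩
    refine ⟨{p | f (lit p.1 p.2).1 = (lit p.1 p.2).2}, ?_, ?_⟩
    · exact Ent1.goal fun i => (hf i).elim fun j hj => Ent1.clause (Ent1.edb hj)
    · intro h
      have key : ∀ a : PAtom n, Ent2 lit {p | f (lit p.1 p.2).1 = (lit p.1 p.2).2} a →
          a ≠ PAtom.g := by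
        intro a ha
        induction ha with
        | edb _ => simp
        | goal h1 h2 e1 e2 ih1 ih2 =>
          cases e1 with
          | edb hd1 =>
            cases e2 with
            | edb hd2 =>
              intro _
              simp only [Set.mem_setOf_eq] at hd1 hd2
              rw [h2, h1, hd2] at hd1
              simp at hd1
      exact key _ h rfl
  · rintro ⟨D, h1, h2⟩
    classical
    refine ⟨fun v => decide (∃ p : Fin n × Fin 3, p ∈ D ∧ lit p.1 p.2 = (v, true)), ?_⟩
    intro i
    have hc : Ent1 D (.c i) := by cases h1 with | goal h => exact h i
    obtain ⟨j, hj⟩ : ∃ j, (i, j) ∈ D := by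
      cases hc with | clause hl => cases hl with | edb hd => exact ⟨_, hd⟩
    refine ⟨j, ?_⟩
    cases hb : (lit i j).2 with
    | true =>
      simp only [decide_eq_true_eq]
      exact ⟨(i, j), hj, Prod.ext rfl hb⟩
    | false =>
      simp only [decide_eq_false_iff_not]
      rintro ⟨⟨p, q⟩, hpq, hlit⟩
      exact h2 (Ent2.goal (i := p) (p := i) (j := q) (q := j)
        (by rw [hlit]) (by rw [hlit, hb]; rfl) (Ent2.edb hpq) (Ent2.edb hj))
end

section
/- Uniform containment reduces to rule entailment (freezing): for temporal Datalog programs Π₁ and Π₂, Π₁ is uniformly contained in Π₂ if and only if for every rule r = (body → head) in Π₁, taking E_r to be the 'frozen' body of r (each variable replaced by a distinct fresh constant) and α_r the correspondingly frozen head, it holds that Π₂ ∪ E_r ⊨ α_r. -/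
theorem Entails.cut_s17 {A : Type} {Pr : Set (RigidRule A)} {Pt : Set (FPRule A)}
    {F E : Set (TFact A)} {α : TFact A} (h : Entails Pr Pt F α)
    (hE : ∀ f ∈ F, Entails Pr Pt E f) : Entails Pr Pt E α := by
  induction h with
  | fact hf => exact hE _ hf
  | rigid hr _ ih => exact Entails.rigid hr ih
  | temp t hr hle _ _ ih1 ih2 => exact Entails.temp t hr hle ih1 ih2

/-- Uniform containment reduces to rule entailment by freezing: `Π₁ ⊑ᵘ Π₂` iff
for every rule `r` of `Π₁`, the frozen head of `r` is entailed by `Π₂` together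
with the frozen body of `r` (the time variable being replaced by an arbitrary
fresh time point `t`, and rules being already object-ground). -/
theorem uniform_containment_iff_frozen_rule_entailment {A : Type}
    (Pr1 Pr2 : Set (RigidRule A)) (Pt1 Pt2 : Set (FPRule A)) :
    (∀ (E : Set (TFact A)) (α : TFact A),
        Entails Pr1 Pt1 E α → Entails Pr2 Pt2 E α) ↔
    ((∀ r ∈ Pr1,
        Entails Pr2 Pt2 {f : TFact A | ∃ b ∈ r.body, f = TFact.rigid b}
          (.rigid r.head)) ∧
     (∀ r ∈ Pt1, ∀ t : ℕ, (∀ p ∈ r.tempBody, p.2 ≤ t) →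
        Entails Pr2 Pt2
          ({f : TFact A | ∃ p ∈ r.tempBody, f = TFact.temporal p.1 (t - p.2)} ∪
           {f : TFact A | ∃ b ∈ r.rigidBody, f = TFact.rigid b})
          (.temporal r.headPred t))) := by
  constructor
  · intro H
    constructor
    · intro r hr
      exact H _ _ (Entails.rigid hr (fun b hb => Entails.fact ⟨b, hb, rfl⟩))
    · intro r hr t ht
      exact H _ _ (Entails.temp t hr ht
        (fun p hp => Entails.fact (Or.inl ⟨p, hp, rfl⟩))
        (fun b hb => Entails.fact (Or.inr ⟨b, hb, rfl⟩)))
  · rintro ⟨H1, H2⟩ E α h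
    induction h with
    | fact hf => exact Entails.fact hf
    | rigid hr _ ih =>
      exact (H1 _ hr).cut_s17 (by rintro f ⟨b, hb, rfl⟩; exact ih b hb)
    | temp t hr hle _ _ ih1 ih2 =>
      refine (H2 _ hr t hle).cut_s17 ?_
      rintro f (⟨p, hp, rfl⟩ | ⟨b, hb, rfl⟩)
      · exact ih1 p hp
      · exact ih2 b hb
end
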